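/- arXiv:2603.24317 — 4 statements merged into one kernel-verified Lean document; each statement's English description precedes it below -/
import Mathlib

section
/- Let F be a continuous cdf on [0,1], strictly increasing on its support, with v̲ = inf supp(F), and let n ≥ 2. The canonical equilibrium strategy β*(v) = v - ∫_{v̲}^{v} F(t)^{n-1}/F(v)^{n-1} dt (extended by β*(v) = v on [0, v̲]) is continuous and nondecreasing on [0,1], and strictly increasing on supp(F). -/
open Set

/-- The canonical equilibrium strategy
β*(v) = v - ∫_{v̲}^v F(t)^{n-1}/F(v)^{n-1} dt (extended by β*(v) = v on [0,v̲]) is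
continuous and nondecreasing on [0,1], and strictly increasing on the support S of F. -/
theorem canonical_strategy_continuous_monotone (n : ℕ) (hn : 2 ≤ n)
    (F : ℝ → ℝ) (S : Set ℝ) (vlow : ℝ)
    (hF0 : F 0 = 0) (hF1 : F 1 = 1)
    (hFc : ContinuousOn F (Set.Icc 0 1)) (hFm : MonotoneOn F (Set.Icc 0 1))
    (hSsub : S ⊆ Set.Icc 0 1) (hSne : S.Nonempty) (hSclosed : IsClosed S)
    (hstrict : StrictMonoOn F S)
    (hconst : ∀ a ∈ Set.Icc 0 1 \ S, ∀ b ∈ Set.Icc 0 1 \ S,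
      Set.Icc a b ⊆ Sᶜ → F a = F b)
    (hvlow : vlow = sInf S)
    (hFpos : ∀ v ∈ Set.Icc (0:ℝ) 1, vlow < v → 0 < F v)
    (β : ℝ → ℝ)
    (hβ : ∀ v, β v = if v ≤ vlow then v
      else v - ∫ t in vlow..v, F t ^ (n - 1) / F v ^ (n - 1)) :
    ContinuousOn β (Set.Icc 0 1) ∧ MonotoneOn β (Set.Icc 0 1) ∧ StrictMonoOn β S := by
  have hm0 : n - 1 ≠ 0 := by omega
  have hbddS : BddBelow S := BddBelow.mono hSsub bddBelow_Icc
  have hvS : vlow ∈ S := hvlow ▸ hSclosed.csInf_mem hSne hbddS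
  have hv01 : vlow ∈ Icc (0:ℝ) 1 := hSsub hvS
  have hFnn : ∀ t ∈ Icc (0:ℝ) 1, 0 ≤ F t := fun t ht => by
    have := hFm (left_mem_Icc.2 zero_le_one) ht ht.1
    linarith [hF0 ▸ this]
  set g : ℝ → ℝ := fun t => F t ^ (n - 1) with hgdef
  have hgc : ContinuousOn g (Icc 0 1) := hFc.pow _
  have hgnn : ∀ t ∈ Icc (0:ℝ) 1, 0 ≤ g t := fun t ht => pow_nonneg (hFnn t ht) _
  have hgm : MonotoneOn g (Icc 0 1) := fun a ha b hb hab =>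
    pow_le_pow_left₀ (hFnn a ha) (hFm ha hb hab) _
  have hgpos : ∀ v ∈ Icc (0:ℝ) 1, vlow < v → 0 < g v := fun v hv h =>
    pow_pos (hFpos v hv h) _
  have hInt : ∀ a ∈ Icc (0:ℝ) 1, ∀ b ∈ Icc (0:ℝ) 1,
      IntervalIntegrable g MeasureTheory.volume a b := by
    intro a ha b hb
    refine (hgc.mono ?_).intervalIntegrable
    rw [uIcc_eq_union]
    exact union_subset (Icc_subset_Icc ha.1 hb.2) (Icc_subset_Icc hb.1 ha.2)
  set I : ℝ → ℝ := fun v => ∫ t in vlow..v, g t with hIdef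
  -- bounds on pieces of the integral
  have hJnn : ∀ a ∈ Icc (0:ℝ) 1, ∀ b ∈ Icc (0:ℝ) 1, a ≤ b → 0 ≤ ∫ t in a..b, g t := by
    intro a ha b hb hab
    exact intervalIntegral.integral_nonneg hab fun t ht =>
      hgnn t ⟨le_trans ha.1 ht.1, le_trans ht.2 hb.2⟩
  have hJle : ∀ a ∈ Icc (0:ℝ) 1, ∀ b ∈ Icc (0:ℝ) 1, a ≤ b →
      (∫ t in a..b, g t) ≤ (b - a) * g b := by
    intro a ha b hb hab
    have := intervalIntegral.integral_mono_on (f := g) (g := fun _ => g b)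
      (μ := MeasureTheory.volume) hab (hInt a ha b hb) intervalIntegrable_const
      (fun t ht => hgm ⟨le_trans ha.1 ht.1, le_trans ht.2 hb.2⟩ hb ht.2)
    simpa using this
  -- formula for β above vlow
  have hβv : ∀ v, vlow < v → β v = v - I v / g v := by
    intro v hv
    rw [hβ, if_neg (not_le.2 hv)]
    congr 1
    exact intervalIntegral.integral_div _ _
  have hβlow : ∀ v, v ≤ vlow → β v = v := fun v hv => by rw [hβ, if_pos hv]
  -- bounds on β
  have hβub : ∀ v ∈ Icc (0:ℝ) 1, vlow < v → β v ≤ v := by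
    intro v hv h
    rw [hβv v h]
    have := hJnn vlow hv01 v hv (le_of_lt h)
    have hg := hgpos v hv h
    have : 0 ≤ I v / g v := div_nonneg this (le_of_lt hg)
    linarith
  have hβlb : ∀ v ∈ Icc (0:ℝ) 1, vlow < v → vlow ≤ β v := by
    intro v hv h
    rw [hβv v h]
    have hg := hgpos v hv h
    have h1 : I v / g v ≤ v - vlow := by
      rw [div_le_iff₀ hg]
      exact hJle vlow hv01 v hv (le_of_lt h)
    linarith
  -- key strict comparison on S
  have hkey : ∀ v ∈ S, ∀ w ∈ S, v < w → β v < β w := by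
    intro v hv w hw hvw
    have hv1 : v ∈ Icc (0:ℝ) 1 := hSsub hv
    have hw1 : w ∈ Icc (0:ℝ) 1 := hSsub hw
    have hvlv : vlow ≤ v := hvlow ▸ csInf_le hbddS hv
    have hFvw : F v < F w := hstrict hv hw hvw
    have hgvw : g v < g w := by
      exact pow_lt_pow_left₀ hFvw (hFnn v hv1) hm0
    have hgw : 0 < g w := lt_of_le_of_lt (hgnn v hv1) hgvw
    -- find c ∈ (v, w) with g c < g w
    obtain ⟨c, hc1, hc2⟩ : ∃ c, g c < g w ∧ c ∈ Ioo v w := by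
      have hcw : ContinuousWithinAt g (Icc 0 1) v := hgc v hv1
      have hsub : Ioo v w ⊆ Icc (0:ℝ) 1 := fun t ht =>
        ⟨le_trans hv1.1 (le_of_lt ht.1), le_trans (le_of_lt ht.2) hw1.2⟩
      have hcw' : ContinuousWithinAt g (Ioo v w) v := hcw.mono hsub
      have hev : ∀ᶠ t in nhdsWithin v (Ioo v w), g t < g w :=
        hcw' (Iio_mem_nhds hgvw)
      have hne : (nhdsWithin v (Ioo v w)).NeBot := left_nhdsWithin_Ioo_neBot hvw
      obtain ⟨c, hc, hc'⟩ := (hev.and eventually_mem_nhdsWithin).exists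
      exact ⟨c, hc, hc'⟩
    have hc01 : c ∈ Icc (0:ℝ) 1 := ⟨le_trans hv1.1 (le_of_lt hc2.1), le_trans (le_of_lt hc2.2) hw1.2⟩
    -- strict integral bound: ∫_v^w g < (w - v) * g w
    have hJstrict : (∫ t in v..w, g t) < (w - v) * g w := by
      have hsplit : (∫ t in v..c, g t) + (∫ t in c..w, g t) = ∫ t in v..w, g t :=
        intervalIntegral.integral_add_adjacent_intervals (hInt v hv1 c hc01) (hInt c hc01 w hw1)
      have h1 : (∫ t in v..c, g t) ≤ (c - v) * g c := hJle v hv1 c hc01 (le_of_lt hc2.1)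
      have h2 : (∫ t in c..w, g t) ≤ (w - c) * g w := hJle c hc01 w hw1 (le_of_lt hc2.2)
      nlinarith [hc2.1, hc2.2, hc1]
    have hIsplit : I v + (∫ t in v..w, g t) = I w :=
      intervalIntegral.integral_add_adjacent_intervals (hInt vlow hv01 v hv1) (hInt v hv1 w hw1)
    have hβw : β w = w - I w / g w := hβv w (lt_of_le_of_lt hvlv hvw)
    have hIvnn : 0 ≤ I v := hJnn vlow hv01 v hv1 hvlv
    have hstep : β v ≤ v - I v / g w := by
      rcases eq_or_lt_of_le hvlv with h | h
      · rw [hβlow v h.symm.le]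
        have : I v = 0 := by rw [hIdef]; simp [← h]
        simp [this]
      · rw [hβv v h]
        have hgv : 0 < g v := hgpos v hv1 h
        have : I v / g w ≤ I v / g v := div_le_div_of_nonneg_left hIvnn hgv (le_of_lt hgvw)
        linarith
    have : (∫ t in v..w, g t) / g w < w - v := (div_lt_iff₀ hgw).2 (by linarith)
    have hβweq : β w = w - I v / g w - (∫ t in v..w, g t) / g w := by
      rw [hβw, ← hIsplit]; ring
    linarith
  -- monotone
  have hmono : MonotoneOn β (Icc 0 1) := by
    intro v hv w hw hvw
    rcases le_or_gt w vlow with hwl | hwl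
    · rw [hβlow v (le_trans hvw hwl), hβlow w hwl]; exact hvw
    rcases le_or_gt v vlow with hvl | hvl
    · rw [hβlow v hvl]
      exact le_trans (le_trans hvl (hβlb w hw hwl)) le_rfl
    · rcases eq_or_lt_of_le hvw with rfl | hvw'
      · exact le_rfl
      have hgv : 0 < g v := hgpos v hv hvl
      have hgw : 0 < g w := hgpos w hw hwl
      have hgvw : g v ≤ g w := hgm hv hw hvw
      have hIvnn : 0 ≤ I v := hJnn vlow hv01 v hv (le_of_lt hvl)
      have hIsplit : I v + (∫ t in v..w, g t) = I w :=
        intervalIntegral.integral_add_adjacent_intervals (hInt vlow hv01 v hv) (hInt v hv w hw)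
      have hJ : (∫ t in v..w, g t) ≤ (w - v) * g w := hJle v hv w hw hvw
      have h1 : I v / g w ≤ I v / g v := div_le_div_of_nonneg_left hIvnn hgv hgvw
      have h2 : (∫ t in v..w, g t) / g w ≤ w - v := (div_le_iff₀ hgw).2 (by linarith)
      rw [hβv v hvl, hβv w hwl, ← hIsplit]
      rw [add_div]
      linarith
  -- continuity
  have hcont : ContinuousOn β (Icc 0 1) := by
    intro v hv
    rcases lt_trichotomy v vlow with h | h | h
    · have hev : ∀ᶠ t in nhdsWithin v (Icc 0 1), β t = t := by
        filter_upwards [nhdsWithin_le_nhds (Iio_mem_nhds h)] with t ht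
        exact hβlow t (le_of_lt ht)
      exact (continuousWithinAt_id).congr_of_eventuallyEq hev (hβlow v (le_of_lt h))
    · -- squeeze at vlow
      subst h
      have hβv0 : β v = v := hβlow v le_rfl
      rw [ContinuousWithinAt, hβv0]
      have hlb : ∀ᶠ t in nhdsWithin v (Icc 0 1), min t v ≤ β t := by
        filter_upwards [self_mem_nhdsWithin] with t ht
        rcases le_or_gt t v with h' | h'
        · rw [hβlow t h']; exact min_le_left _ _
        · exact le_trans (min_le_right _ _) (hβlb t ht h')
      have hub : ∀ᶠ t in nhdsWithin v (Icc 0 1), β t ≤ max t v := by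
        filter_upwards [self_mem_nhdsWithin] with t ht
        rcases le_or_gt t v with h' | h'
        · rw [hβlow t h']; exact le_max_left _ _
        · exact le_trans (hβub t ht h') (le_max_left _ _)
      have hl : Filter.Tendsto (fun t => min t v) (nhdsWithin v (Icc 0 1)) (nhds v) := by
        have h1 : Filter.Tendsto (fun t : ℝ => min t v) (nhds v) (nhds (min v v)) :=
          (continuous_id.min continuous_const).tendsto v
        rw [min_self] at h1
        exact h1.mono_left nhdsWithin_le_nhds
      have hu : Filter.Tendsto (fun t => max t v) (nhdsWithin v (Icc 0 1)) (nhds v) := by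
        have h1 : Filter.Tendsto (fun t : ℝ => max t v) (nhds v) (nhds (max v v)) :=
          (continuous_id.max continuous_const).tendsto v
        rw [max_self] at h1
        exact h1.mono_left nhdsWithin_le_nhds
      exact tendsto_of_tendsto_of_tendsto_of_le_of_le' hl hu hlb hub
    · -- v > vlow
      have hvl1 : vlow ≤ 1 := hv01.2
      have hIcont : ContinuousOn I (Icc vlow 1) := by
        have : MeasureTheory.IntegrableOn g (uIcc vlow 1) MeasureTheory.volume := by
          rw [uIcc_of_le hvl1]
          exact (hgc.mono (Icc_subset_Icc hv01.1 le_rfl)).integrableOn_Icc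
        have := intervalIntegral.continuousOn_primitive_interval this
        rwa [uIcc_of_le hvl1] at this
      have hvmem : v ∈ Icc vlow 1 := ⟨le_of_lt h, hv.2⟩
      have hgcv : ContinuousWithinAt g (Icc vlow 1) v :=
        (hgc.mono (Icc_subset_Icc hv01.1 le_rfl)) v hvmem
      have hgv : g v ≠ 0 := ne_of_gt (hgpos v hv h)
      have hcf : ContinuousWithinAt (fun t => t - I t / g t) (Icc vlow 1) v :=
        (continuousWithinAt_id).sub ((hIcont v hvmem).div hgcv hgv)
      have hmem : Icc vlow 1 ∈ nhdsWithin v (Icc (0:ℝ) 1) := by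
        apply Filter.mem_of_superset (inter_mem_nhdsWithin (Icc 0 1) (Ioi_mem_nhds h))
        rintro t ⟨ht1, ht2⟩
        exact ⟨le_of_lt ht2, ht1.2⟩
      have hcf' : ContinuousWithinAt (fun t => t - I t / g t) (Icc (0:ℝ) 1) v :=
        hcf.mono_of_mem_nhdsWithin hmem
      have hev : ∀ᶠ t in nhdsWithin v (Icc 0 1), β t = t - I t / g t := by
        filter_upwards [nhdsWithin_le_nhds (Ioi_mem_nhds h)] with t ht
        exact hβv t ht
      exact hcf'.congr_of_eventuallyEq hev (hβv v h)
  exact ⟨hcont, hmono, fun v hv w hw hvw => hkey v hv w hw hvw⟩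
end

section
/- Let F be the cdf of a continuous value distribution, let β be a strictly increasing, continuous, no-overbidding bidding strategy on [0,1], and suppose n = 2 bidders. If F(x) = x on [0,1] \ (v₁, v₂) and both F₁ (uniform) and F₂ (with F₂(v₁)=v₁, F₂(v₂-ξ)=v₁+ξ, linear in between and on [v₂-ξ, v₂]) are consistent with queries, then any strategy β that is an ε-BNE with respect to both F₁ and F₂ satisfies β(v₁) > v₁ - (1/(δ-ξ))·(1/v₁)·[ξ + (1+v₁)ε], where δ = v₂ - v₁ and 0 < ξ < δ. -/
open Set Function

/-- In the two-bidder lower-bound construction, if β is a continuous,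
strictly increasing, no-overbidding strategy that is an ε-BNE with respect to both
F₁ (uniform) and F₂ (the perturbed cdf), then
β(v₁) > v₁ - (1/(δ-ξ))·(1/v₁)·[ξ + (1+v₁)ε], where δ = v₂ - v₁. -/
theorem lower_bound_key_inequality (ε ξ δ v₁ v₂ : ℝ) (β : ℝ → ℝ)
    (hv₁ : 0 < v₁) (hv₁₂ : v₁ < v₂) (hv₂ : v₂ ≤ 1)
    (hδ : δ = v₂ - v₁) (hξ : 0 < ξ) (hξδ : ξ < δ) (hε : 0 ≤ ε)
    (hβc : ContinuousOn β (Set.Icc 0 1)) (hβm : StrictMonoOn β (Set.Icc 0 1))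
    (hβrange : ∀ v ∈ Set.Icc (0:ℝ) 1, β v ∈ Set.Icc (0:ℝ) 1)
    (hno : ∀ v ∈ Set.Icc (0:ℝ) 1, β v ≤ v)
    (F₁ F₂ : ℝ → ℝ)
    (hF₁ : ∀ x, F₁ x = x)
    (hF₂ : ∀ x, F₂ x =
      if x ≤ v₁ then x
      else if x ≤ v₂ - ξ then v₁ + (ξ / (δ - ξ)) * (x - v₁)
      else if x ≤ v₂ then v₁ + ξ + ((δ - ξ) / ξ) * (x - v₂ + ξ)
      else x)
    -- β is an ε-BNE with respect to F₁ and F₂, where the utility of bidding b at value v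
    -- is (v - b)·Fᵢ(β⁻¹(b)):
    (hBNE₁ : ∀ v ∈ Set.Icc (0:ℝ) 1, ∀ b ∈ Set.Icc (0:ℝ) 1,
      (v - b) * F₁ (Function.invFunOn β (Set.Icc 0 1) b) ≤ (v - β v) * F₁ v + ε)
    (hBNE₂ : ∀ v ∈ Set.Icc (0:ℝ) 1, ∀ b ∈ Set.Icc (0:ℝ) 1,
      (v - b) * F₂ (Function.invFunOn β (Set.Icc 0 1) b) ≤ (v - β v) * F₂ v + ε) :
    β v₁ > v₁ - (1 / (δ - ξ)) * (1 / v₁) * (ξ + (1 + v₁) * ε) := by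
  set w : ℝ := v₂ - ξ with hw
  have hδξ : 0 < δ - ξ := by linarith
  have hv₁w : v₁ < w := by rw [hw]; linarith [hδ ▸ hξδ]
  have hwlt : w < 1 := by rw [hw]; linarith
  have hv₁1 : v₁ < 1 := lt_of_lt_of_le hv₁₂ hv₂
  have hmemv₁ : v₁ ∈ Set.Icc (0:ℝ) 1 := ⟨hv₁.le, hv₁1.le⟩
  have hmemw : w ∈ Set.Icc (0:ℝ) 1 := ⟨by linarith, hwlt.le⟩
  have hinj : Set.InjOn β (Set.Icc 0 1) := hβm.injOn
  have hinv₁ : Function.invFunOn β (Set.Icc 0 1) (β v₁) = v₁ :=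
    hinj.leftInvOn_invFunOn hmemv₁
  have hinvw : Function.invFunOn β (Set.Icc 0 1) (β w) = w :=
    hinj.leftInvOn_invFunOn hmemw
  have hβv₁mem := hβrange v₁ hmemv₁
  have hβwmem := hβrange w hmemw
  have hb₁ : 0 ≤ β v₁ := hβv₁mem.1
  -- F₂ values
  have hF₂v₁ : F₂ v₁ = v₁ := by rw [hF₂]; simp
  have hF₂w : F₂ w = v₁ + ξ := by
    rw [hF₂, if_neg (not_le.mpr hv₁w), if_pos le_rfl]
    have : w - v₁ = δ - ξ := by rw [hw, hδ]; ring
    rw [this]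
    field_simp
  -- inequality (A): deviation of value v₁ to bid β w, under F₁
  have hA := hBNE₁ v₁ hmemv₁ (β w) hβwmem
  rw [hinvw, hF₁, hF₁] at hA
  -- inequality (B): deviation of value w to bid β v₁, under F₂
  have hB := hBNE₂ w hmemw (β v₁) hβv₁mem
  rw [hinv₁, hF₂v₁, hF₂w] at hB
  -- key polynomial inequality
  have hwv₁ : w - v₁ = δ - ξ := by rw [hw, hδ]; ring
  have key : (v₁ - β v₁) * ((δ - ξ) * v₁) < ξ + (1 + v₁) * ε := by
    rw [← hwv₁]
    have h1 := mul_le_mul_of_nonneg_left hA (by linarith : (0:ℝ) ≤ v₁ + ξ)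
    have h2 := mul_le_mul_of_nonneg_left hB (by linarith : (0:ℝ) ≤ w)
    have h3 : 0 < v₁ * ξ * (w - v₁) := by
      apply mul_pos (mul_pos hv₁ hξ); linarith
    have h4 : 0 ≤ v₁ * ξ * β v₁ := mul_nonneg (mul_nonneg hv₁.le hξ.le) hb₁
    have h5 : 0 ≤ ξ * ((1 - w) * (1 + w)) := by
      apply mul_nonneg hξ.le
      apply mul_nonneg <;> linarith
    have h6 : 0 ≤ (1 - v₂) * ε := mul_nonneg (by linarith) hε
    nlinarith [h1, h2, h3, h4, h5, h6]
  have hC : (1 / (δ - ξ)) * (1 / v₁) * (ξ + (1 + v₁) * ε)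
      = (ξ + (1 + v₁) * ε) / ((δ - ξ) * v₁) := by
    have h1 : δ - ξ ≠ 0 := ne_of_gt hδξ
    have h2 : v₁ ≠ 0 := ne_of_gt hv₁
    field_simp
  have hpos : 0 < (δ - ξ) * v₁ := mul_pos hδξ hv₁
  rw [gt_iff_lt, sub_lt_comm, hC, lt_div_iff₀ hpos]
  exact key
end

section
/- Any algorithm that computes an ε-approximate symmetric Bayes–Nash equilibrium (that is continuous, strictly increasing, and no-overbidding) of a two-bidder first-price auction with continuous bids in [0,1], given only oracle access to the value cdf, must make at least Ω(1/ε) cdf queries. Concretely, if the algorithm makes k queries then k ≥ (1/45)(1/ε) − 6/5. -/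
open Set Function

/-!
If the algorithm queries k points, one of the k + 1 open intervals of length w = 1/(3(k+1))
tiling [2/3, 1] contains no query, and the cdf can be changed there without affecting any
answer. Take such a gap (c, d) and p slightly above c, and compare the uniform cdf with the
cdf that moves almost all the mass of (c, d) down to (c, p). Under the uniform cdf, bidding
β(p/2) shows that a bidder of value p keeps a margin p - β(p) ≳ 1/6. Adding the deviation
"value p bids β(d)" under the uniform cdf to "value d bids β(p)" under the perturbed one, the
bids cancel and one is left with (d - p)(p - β(p)) ≲ 2ε, so w ≲ ε, i.e. k ≳ 1/ε.
-/

def IsApproxBNE (β F : ℝ → ℝ) (ε : ℝ) : Prop :=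
  ∀ v ∈ Icc (0 : ℝ) 1, ∀ b ∈ Icc (0 : ℝ) 1,
    (v - b) * F (invFunOn β (Icc 0 1) b) ≤ (v - β v) * F v + ε

namespace IsApproxBNE

variable {β F : ℝ → ℝ} {ε : ℝ}

theorem deviate (h : IsApproxBNE β F ε) (hinj : InjOn β (Icc 0 1))
    (hmaps : MapsTo β (Icc 0 1) (Icc 0 1)) {v a : ℝ} (hv : v ∈ Icc (0 : ℝ) 1)
    (ha : a ∈ Icc (0 : ℝ) 1) :
    (v - β a) * F a ≤ (v - β v) * F v + ε := by
  simpa only [hinj.leftInvOn_invFunOn ha] using h v hv (β a) (hmaps ha)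

/-- Under the uniform cdf, a no-overbidding bidder of value `v` could bid `β (v / 2) ≤ v / 2`
and win with probability `v / 2`. -/
theorem sq_div_four_sub_le (h : IsApproxBNE β id ε) (hinj : InjOn β (Icc 0 1))
    (hmaps : MapsTo β (Icc 0 1) (Icc 0 1)) (hno : ∀ v ∈ Icc (0 : ℝ) 1, β v ≤ v) {v : ℝ}
    (hv : v ∈ Icc (0 : ℝ) 1) :
    v ^ 2 / 4 - ε ≤ (v - β v) * v := by
  have hhalf : v / 2 ∈ Icc (0 : ℝ) 1 := ⟨by linarith [hv.1], by linarith [hv.1, hv.2]⟩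
  have hdev : (v - β (v / 2)) * (v / 2) ≤ (v - β v) * v + ε := h.deviate hinj hmaps hv hhalf
  nlinarith [hno _ hhalf, hv.1]

theorem sub_mul_sub_le (hid : IsApproxBNE β id ε) (hF : IsApproxBNE β F ε)
    (hinj : InjOn β (Icc 0 1)) (hmaps : MapsTo β (Icc 0 1) (Icc 0 1)) {p d : ℝ}
    (hp : p ∈ Icc (0 : ℝ) 1) (hd : d ∈ Icc (0 : ℝ) 1) (hFd : F d = d) :
    (d - p) * (p - β p) ≤ 2 * ε + (d - β p) * (d - F p) := by
  have hup : (d - β p) * F p ≤ (d - β d) * F d + ε := hF.deviate hinj hmaps hd hp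
  have hdown : (p - β d) * d ≤ (p - β p) * p + ε := hid.deviate hinj hmaps hp hd
  rw [hFd] at hup
  linarith

end IsApproxBNE

/-- For `c < p ≤ q < d`: the identity outside `[c, d]`, and on `[c, d]` the piecewise linear map
through `(c, c)`, `(p, q)` and `(d, d)`. -/
noncomputable def bumpCdf (c p q d x : ℝ) : ℝ :=
  max x (min (c + (q - c) / (p - c) * (x - c)) (d + (d - q) / (d - p) * (x - d)))

section bumpCdf

variable {c p q d : ℝ}

theorem continuous_bumpCdf : Continuous (bumpCdf c p q d) := by
  unfold bumpCdf
  fun_prop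

theorem strictMono_bumpCdf (hcp : c < p) (hpq : p ≤ q) (hqd : q < d) :
    StrictMono (bumpCdf c p q d) := by
  have hleft : 0 < (q - c) / (p - c) := div_pos (by linarith) (by linarith)
  have hright : 0 < (d - q) / (d - p) := div_pos (by linarith) (by linarith)
  intro x y hxy
  refine max_lt_max hxy (min_lt_min ?_ ?_)
  · nlinarith
  · nlinarith

theorem bumpCdf_of_le (hcp : c < p) (hpq : p ≤ q) {x : ℝ} (hx : x ≤ c) :
    bumpCdf c p q d x = x := by
  have hslope : 1 ≤ (q - c) / (p - c) := (one_le_div (by linarith)).2 (by linarith)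
  refine max_eq_left (min_le_of_left_le ?_)
  nlinarith

theorem bumpCdf_of_ge (hpq : p ≤ q) (hqd : q < d) {x : ℝ} (hx : d ≤ x) :
    bumpCdf c p q d x = x := by
  have hslope : (d - q) / (d - p) ≤ 1 := (div_le_one (by linarith)).2 (by linarith)
  refine max_eq_left (min_le_of_right_le ?_)
  nlinarith

theorem bumpCdf_apply_self (hcp : c < p) (hpq : p ≤ q) (hqd : q < d) :
    bumpCdf c p q d p = q := by
  have hleft : c + (q - c) / (p - c) * (p - c) = q := by
    rw [div_mul_cancel₀ _ (by linarith)]; ring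
  have hright : d + (d - q) / (d - p) * (p - d) = q := by
    rw [show p - d = -(d - p) by ring, mul_neg, div_mul_cancel₀ _ (by linarith)]; ring
  rw [bumpCdf, hleft, hright, min_self, max_eq_right hpq]

end bumpCdf

def ConsistentCdf {k : ℕ} (X : Fin k → ℝ) (F : ℝ → ℝ) : Prop :=
  ContinuousOn F (Icc 0 1) ∧ StrictMonoOn F (Icc 0 1) ∧ F 0 = 0 ∧ F 1 = 1 ∧
    ∀ i, F (X i) = X i

theorem consistentCdf_id {k : ℕ} (X : Fin k → ℝ) : ConsistentCdf X id :=
  ⟨continuousOn_id, strictMonoOn_id, rfl, rfl, fun _ => rfl⟩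

theorem consistentCdf_bumpCdf {k : ℕ} {X : Fin k → ℝ} {c p q d : ℝ} (hc : 0 ≤ c)
    (hcp : c < p) (hpq : p ≤ q) (hqd : q < d) (hd : d ≤ 1) (hX : ∀ i, X i ∉ Ioo c d) :
    ConsistentCdf X (bumpCdf c p q d) := by
  refine ⟨continuous_bumpCdf.continuousOn, (strictMono_bumpCdf hcp hpq hqd).strictMonoOn _,
    bumpCdf_of_le hcp hpq hc, bumpCdf_of_ge hpq hqd hd, fun i => ?_⟩
  by_cases hXc : X i ≤ c
  · exact bumpCdf_of_le hcp hpq hXc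
  · exact bumpCdf_of_ge hpq hqd (not_lt.1 fun hXd => hX i ⟨not_le.1 hXc, hXd⟩)

theorem exists_Ioo_forall_notMem {k : ℕ} (X : Fin k → ℝ) (a : ℝ) {w : ℝ} (hw : 0 < w) :
    ∃ j : ℕ, j ≤ k ∧ ∀ i, X i ∉ Ioo (a + j * w) (a + j * w + w) := by
  classical
  let cell : Fin k → ℕ := fun i => ⌊(X i - a) / w⌋₊
  have hcard : (Finset.univ.image cell).card < (Finset.range (k + 1)).card := by
    simpa using (Finset.card_image_le (s := Finset.univ) (f := cell)).trans_lt
      (by simp : (Finset.univ : Finset (Fin k)).card < k + 1)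
  obtain ⟨j, hj, hjcell⟩ := Finset.exists_mem_notMem_of_card_lt_card hcard
  refine ⟨j, Nat.lt_succ_iff.1 (Finset.mem_range.1 hj), fun i hi => hjcell ?_⟩
  have hlo : (j : ℝ) < (X i - a) / w := by rw [lt_div_iff₀ hw]; linarith [hi.1]
  have hhi : (X i - a) / w < j + 1 := by rw [div_lt_iff₀ hw]; linarith [hi.2]
  refine Finset.mem_image.2 ⟨i, Finset.mem_univ _, ?_⟩
  exact (Nat.floor_eq_iff ((Nat.cast_nonneg j).trans hlo.le)).2 ⟨hlo.le, hhi⟩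

theorem exists_Ioo_subset_Icc_forall_notMem {k : ℕ} (X : Fin k → ℝ) :
    ∃ c : ℝ, 2 / 3 ≤ c ∧ c + 1 / (3 * (k + 1)) ≤ 1 ∧
      ∀ i, X i ∉ Ioo c (c + 1 / (3 * (k + 1))) := by
  have hw : (0 : ℝ) < 1 / (3 * (k + 1)) := by positivity
  obtain ⟨j, hjk, hX⟩ := exists_Ioo_forall_notMem X (2 / 3) hw
  refine ⟨_, le_add_of_nonneg_right (by positivity), ?_, hX⟩
  have hj : (j : ℝ) + 1 ≤ k + 1 := by exact_mod_cast Nat.succ_le_succ hjk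
  calc (2 / 3 : ℝ) + j * (1 / (3 * (k + 1))) + 1 / (3 * (k + 1))
      = 2 / 3 + (j + 1) / (3 * (k + 1)) := by ring
    _ ≤ 2 / 3 + (k + 1) / (3 * (k + 1)) := by gcongr
    _ = 1 := by field_simp; ring

theorem one_div_le_of_bid_bounds {ε w p b : ℝ} (k : ℕ) (hε : 0 < ε)
    (hw : w * (3 * (k + 1)) = 1) (hp : 2 / 3 ≤ p) (hb : 0 ≤ b) (hpw : p + 99 / 100 * w ≤ 1)
    (hmargin : p ^ 2 / 4 - ε ≤ (p - b) * p)
    (hbound : 99 / 100 * w * (p - b) ≤ 2 * ε + (p + 99 / 100 * w - b) * (ε * w)) :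
    1 / ε ≤ 45 * k + 54 := by
  have hw0 : 0 < w := pos_of_mul_pos_left (hw.symm ▸ one_pos) (by positivity)
  have hmargin' : 1 / 6 - 3 / 2 * ε ≤ p - b := by
    nlinarith [mul_nonneg hε.le (by linarith : (0 : ℝ) ≤ 3 / 2 * p - 1)]
  have hgap : 99 / 100 * w * (1 / 6 - 3 / 2 * ε) ≤ 2 * ε + ε * w := by
    nlinarith [mul_le_mul_of_nonneg_left hmargin' (by positivity : (0 : ℝ) ≤ 99 / 100 * w),
      mul_pos hε hw0]
  have hscaled : 99 / 100 * (1 / 6 - 3 / 2 * ε) ≤ 6 * ε * (k + 1) + ε := by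
    have := mul_le_mul_of_nonneg_right hgap (by positivity : (0 : ℝ) ≤ 3 * (k + 1))
    nlinarith
  rw [div_le_iff₀ hε]
  nlinarith

theorem query_lower_bound_general (ε : ℝ) (hε : 0 < ε) (k : ℕ) (X : Fin k → ℝ)
    (β : ℝ → ℝ)
    (hβm : StrictMonoOn β (Set.Icc 0 1))
    (hβrange : ∀ v ∈ Set.Icc (0:ℝ) 1, β v ∈ Set.Icc (0:ℝ) 1)
    (hno : ∀ v ∈ Set.Icc (0:ℝ) 1, β v ≤ v)
    (hcorrect : ∀ F : ℝ → ℝ, ContinuousOn F (Set.Icc 0 1) → StrictMonoOn F (Set.Icc 0 1) →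
      F 0 = 0 → F 1 = 1 → (∀ i, F (X i) = X i) →
      -- β is an ε-BNE with respect to F, with utility u(b;v) = (v-b)·F(β⁻¹(b)):
      ∀ v ∈ Set.Icc (0:ℝ) 1, ∀ b ∈ Set.Icc (0:ℝ) 1,
        (v - b) * F (Function.invFunOn β (Set.Icc 0 1) b) ≤ (v - β v) * F v + ε) :
    (1 / 45) * (1 / ε) - 6 / 5 ≤ (k : ℝ) := by
  rcases le_or_gt (1 / 2) ε with hlarge | hsmall
  · have : 1 / ε ≤ 2 := by rw [div_le_iff₀ hε]; linarith
    linarith [k.cast_nonneg (α := ℝ)]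
  obtain ⟨c, hc, hc1, hX⟩ := exists_Ioo_subset_Icc_forall_notMem X
  set w : ℝ := 1 / (3 * (k + 1)) with hw
  have hw0 : 0 < w := by positivity
  have hcp : c < c + w / 100 := by linarith
  have hpq : c + w / 100 ≤ c + w - ε * w := by nlinarith
  have hqd : c + w - ε * w < c + w := by linarith [mul_pos hε hw0]
  have hp : c + w / 100 ∈ Icc (0 : ℝ) 1 := ⟨by linarith, by linarith⟩
  have hd : c + w ∈ Icc (0 : ℝ) 1 := ⟨by linarith, hc1⟩
  have hBNE : ∀ F, ConsistentCdf X F → IsApproxBNE β F ε :=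
    fun F ⟨h₁, h₂, h₃, h₄, h₅⟩ => hcorrect F h₁ h₂ h₃ h₄ h₅
  have hid := hBNE id (consistentCdf_id X)
  have hbump := hBNE _ (consistentCdf_bumpCdf (by linarith) hcp hpq hqd hc1 hX)
  have hmargin := hid.sq_div_four_sub_le hβm.injOn hβrange hno hp
  have hbound :=
    hid.sub_mul_sub_le hbump hβm.injOn hβrange hp hd (bumpCdf_of_ge hpq hqd le_rfl)
  rw [bumpCdf_apply_self hcp hpq hqd] at hbound
  have := one_div_le_of_bid_bounds (w := w) k hε (by rw [hw]; field_simp) (by linarith)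
    (hβrange _ hp).1 (by linarith) hmargin (by convert hbound using 2 <;> ring)
  linarith

/-- Query lower bound for the two-bidder CCFPA. Any (deterministic) algorithm
that makes k cdf queries (at points X 0, …, X (k-1)) and outputs a continuous, strictly
increasing, no-overbidding strategy β that is an ε-BNE with respect to *every* continuous,
strictly increasing cdf F consistent with the answers F(Xᵢ) = Xᵢ, must satisfy
k ≥ (1/45)(1/ε) − 6/5. -/
theorem query_lower_bound (ε : ℝ) (hε : 0 < ε) (k : ℕ) (X : Fin k → ℝ)
    (hX : ∀ i, X i ∈ Set.Icc (0:ℝ) 1)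
    (β : ℝ → ℝ)
    (hβc : ContinuousOn β (Set.Icc 0 1)) (hβm : StrictMonoOn β (Set.Icc 0 1))
    (hβrange : ∀ v ∈ Set.Icc (0:ℝ) 1, β v ∈ Set.Icc (0:ℝ) 1)
    (hno : ∀ v ∈ Set.Icc (0:ℝ) 1, β v ≤ v)
    (hcorrect : ∀ F : ℝ → ℝ, ContinuousOn F (Set.Icc 0 1) → StrictMonoOn F (Set.Icc 0 1) →
      F 0 = 0 → F 1 = 1 → (∀ i, F (X i) = X i) →
      -- β is an ε-BNE with respect to F, with utility u(b;v) = (v-b)·F(β⁻¹(b)):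
      ∀ v ∈ Set.Icc (0:ℝ) 1, ∀ b ∈ Set.Icc (0:ℝ) 1,
        (v - b) * F (Function.invFunOn β (Set.Icc 0 1) b) ≤ (v - β v) * F v + ε) :
    (1 / 45) * (1 / ε) - 6 / 5 ≤ (k : ℝ) :=
  query_lower_bound_general ε hε k X β hβm hβrange hno hcorrect
end

section
/- Let γ ≥ 0 and consider a symmetric first-price auction with n bidders, discrete bids 0 = b₁ < ... < b_m < 1, and continuous value cdf F. Let β be the symmetric monotone strategy with jump points 0 = s₀ ≤ s₁ ≤ ... ≤ s_m = 1 (i.e., β(v) = b_j for v ∈ (s_{j-1}, s_j]), and suppose there exist U₀, ..., U_m ∈ [0,1] such that for each i ∈ [m]: (1) if s_{i-1} < s_i then |u(b_i; s_i) − U_i| ≤ γ and |u(b_i; s_{i-1}) − U_{i-1}| ≤ γ; (2) if s_{i-1} = s_i then U_{i-1} = U_i and u(b_i; s_i) ≤ U_i + γ; (3) s_{i-1} ≥ b_i. Then β is a 2γm-approximate symmetric Bayes–Nash equilibrium. -/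
open Set

/-- The winning probability Δ(x,y) = (1/n)∑_{r=0}^{n-1} F(x)^r F(y)^{n-1-r}. -/
noncomputable def Delta (n : ℕ) (F : ℝ → ℝ) (x y : ℝ) : ℝ :=
  (1 / (n : ℝ)) * ∑ r ∈ Finset.range n, F x ^ r * F y ^ (n - 1 - r)

/-- The interim utility of bidding bᵢ at value v against the symmetric jump-point
strategy s: u(bᵢ; v) = (v − bᵢ)·Δ(s_{i−1}, s_i). -/
noncomputable def util (n : ℕ) (F : ℝ → ℝ) (b s : ℕ → ℝ) (i : ℕ) (v : ℝ) : ℝ :=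
  (v - b i) * Delta n F (s (i - 1)) (s i)

lemma Delta_nonneg' (n : ℕ) (F : ℝ → ℝ) (x y : ℝ) (hx : 0 ≤ F x) (hy : 0 ≤ F y) :
    0 ≤ Delta n F x y := by
  apply mul_nonneg (by positivity)
  exact Finset.sum_nonneg fun r _ => mul_nonneg (pow_nonneg hx _) (pow_nonneg hy _)

lemma Delta_mono' (n : ℕ) (F : ℝ → ℝ) (a c d : ℝ) (ha : 0 ≤ F a) (hc : 0 ≤ F c)
    (hac : F a ≤ F c) (hcd : F c ≤ F d) : Delta n F a c ≤ Delta n F c d := by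
  apply mul_le_mul_of_nonneg_left _ (by positivity)
  apply Finset.sum_le_sum
  intro r _
  exact mul_le_mul (pow_le_pow_left₀ ha hac r) (pow_le_pow_left₀ hc hcd _)
    (pow_nonneg hc _) (pow_nonneg (ha.trans hac) r)

lemma util_shift (n : ℕ) (F : ℝ → ℝ) (b s : ℕ → ℝ) (k : ℕ) (w w' : ℝ) :
    util n F b s k w' = util n F b s k w + (w' - w) * Delta n F (s (k - 1)) (s k) := by
  simp only [util]; ring

/-- Approximate equilibrium conditions imply a 2γm-BNE. If the jump points
0 = s₀ ≤ ... ≤ s_m = 1 and utility values U₀,...,U_m ∈ [0,1] satisfy conditions (1)-(3),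
then the symmetric strategy β (bidding b_ℓ on (s_{ℓ−1}, s_ℓ]) is a 2γm-approximate
symmetric Bayes–Nash equilibrium: no deviation gains more than 2γm. -/
theorem approx_eq_conditions_imply_BNE (γ : ℝ) (hγ : 0 ≤ γ) (n m : ℕ)
    (hn : 1 ≤ n) (hm : 1 ≤ m) (b s U : ℕ → ℝ) (F : ℝ → ℝ)
    (hb1 : b 1 = 0) (hbmono : ∀ i, 1 ≤ i → i < m → b i < b (i + 1)) (hbm : b m < 1)
    (hbnn : ∀ i, 1 ≤ i → i ≤ m → 0 ≤ b i)
    (hs0 : s 0 = 0) (hsm : s m = 1) (hsmono : ∀ i, i < m → s i ≤ s (i + 1))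
    (hFmono : MonotoneOn F (Set.Icc 0 1))
    (hFrange : ∀ x ∈ Set.Icc (0:ℝ) 1, F x ∈ Set.Icc (0:ℝ) 1)
    (hU : ∀ i, i ≤ m → U i ∈ Set.Icc (0:ℝ) 1)
    (hcond1 : ∀ i, 1 ≤ i → i ≤ m → s (i - 1) < s i →
      |util n F b s i (s i) - U i| ≤ γ ∧ |util n F b s i (s (i - 1)) - U (i - 1)| ≤ γ)
    (hcond2 : ∀ i, 1 ≤ i → i ≤ m → s (i - 1) = s i →
      U (i - 1) = U i ∧ util n F b s i (s i) ≤ U i + γ)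
    (hcond3 : ∀ i, 1 ≤ i → i ≤ m → b i ≤ s (i - 1)) :
    ∀ v : ℝ, ∀ ℓ, 1 ≤ ℓ → ℓ ≤ m → v ∈ Set.Ioc (s (ℓ - 1)) (s ℓ) →
      ∀ j, 1 ≤ j → j ≤ m → util n F b s j v ≤ util n F b s ℓ v + 2 * γ * m := by
  intro v ℓ hℓ1 hℓm hv j hj1 hjm
  obtain ⟨hv1, hv2⟩ := hv
  -- monotonicity of s
  have hsle : ∀ c : ℕ, c ≤ m → ∀ a : ℕ, a ≤ c → s a ≤ s c := by
    intro c
    induction c with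
    | zero =>
      intro _ a ha
      have : a = 0 := by omega
      subst this; exact le_rfl
    | succ k ih =>
      intro hk a ha
      rcases Nat.lt_or_ge a (k+1) with h | h
      · exact (ih (by omega) a (by omega)).trans (hsmono k (by omega))
      · have : a = k + 1 := by omega
        subst this; exact le_rfl
  have hs01 : ∀ i : ℕ, i ≤ m → s i ∈ Set.Icc (0:ℝ) 1 := by
    intro i hi
    constructor
    · have := hsle i hi 0 (Nat.zero_le _); rw [hs0] at this; exact this
    · have := hsle m le_rfl i hi; rw [hsm] at this; exact this
  have hF01 : ∀ i : ℕ, i ≤ m → 0 ≤ F (s i) ∧ F (s i) ≤ 1 := by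
    intro i hi
    exact ⟨(hFrange _ (hs01 i hi)).1, (hFrange _ (hs01 i hi)).2⟩
  have hD0 : ∀ k : ℕ, k ≤ m → 0 ≤ Delta n F (s (k-1)) (s k) :=
    fun k hk => Delta_nonneg' _ _ _ _ (hF01 _ (by omega)).1 (hF01 _ hk).1
  have hDm : ∀ k : ℕ, 1 ≤ k → k < m →
      Delta n F (s (k-1)) (s k) ≤ Delta n F (s k) (s (k+1)) := by
    intro k hk1 hkm
    apply Delta_mono' n F _ _ _ (hF01 _ (by omega)).1 (hF01 _ (by omega)).1
    · exact hFmono (hs01 _ (by omega)) (hs01 _ (by omega)) (hsle k (by omega) (k-1) (by omega))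
    · exact hFmono (hs01 _ (by omega)) (hs01 _ (by omega)) (hsmono k hkm)
  rcases lt_trichotomy j ℓ with hjl | rfl | hlj
  · -- downward deviation j < ℓ
    obtain ⟨ℓ', rfl⟩ : ∃ ℓ'', ℓ = ℓ'' + 1 := ⟨ℓ - 1, by omega⟩
    obtain ⟨j', rfl⟩ : ∃ j'', j = j'' + 1 := ⟨j - 1, by omega⟩
    simp only [Nat.add_sub_cancel] at hv1
    have hjℓ' : j' + 1 ≤ ℓ' := by omega
    -- upper bound at own jump point
    have hub2 : util n F b s (j'+1) (s (j'+1)) ≤ U (j'+1) + γ := by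
      rcases eq_or_lt_of_le (hsmono j' (by omega)) with h | h
      · exact (hcond2 (j'+1) (by omega) hjm (by simpa using h)).2
      · have h1 := (hcond1 (j'+1) (by omega) hjm (by simpa using h)).1
        linarith [(abs_le.mp h1).2]
    -- chain upward from j to ℓ-1
    have hE : ∀ i : ℕ, j' + 1 ≤ i → i ≤ ℓ' →
        util n F b s (j'+1) v ≤ U i + γ + (v - s i) * Delta n F (s i) (s (i+1))
          + 2 * γ * ((i:ℝ) - ((j':ℝ) + 1)) := by
      intro i hi
      induction i, hi using Nat.le_induction with
      | base =>
        intro hil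
        have hsh := util_shift n F b s (j'+1) (s (j'+1)) v
        simp only [Nat.add_sub_cancel] at hsh
        have hvs : s (j'+1) ≤ v :=
          le_of_lt (lt_of_le_of_lt (hsle ℓ' (by omega) (j'+1) hjℓ') hv1)
        have hd := hDm (j'+1) (by omega) (by omega)
        simp only [Nat.add_sub_cancel] at hd
        have hprod := mul_le_mul_of_nonneg_left hd (by linarith : (0:ℝ) ≤ v - s (j'+1))
        push_cast
        linarith [hub2, hsh, hprod]
      | succ i hi ih =>
        intro hil
        have hEi := ih (by omega)
        have hvs1 : s (i+1) ≤ v :=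
          le_of_lt (lt_of_le_of_lt (hsle ℓ' (by omega) (i+1) hil) hv1)
        have hd := hDm (i+1) (by omega) (by omega)
        simp only [Nat.add_sub_cancel] at hd
        have hprod := mul_le_mul_of_nonneg_left hd (by linarith : (0:ℝ) ≤ v - s (i+1))
        rcases eq_or_lt_of_le (hsmono i (by omega)) with h | h
        · have hUeq := (hcond2 (i+1) (by omega) (by omega) (by simpa using h)).1
          simp only [Nat.add_sub_cancel] at hUeq
          have e : (v - s i) * Delta n F (s i) (s (i+1))
              = (v - s (i+1)) * Delta n F (s i) (s (i+1)) := by rw [h]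
          have e2 : Delta n F (s i) (s (i+1)) ≤ Delta n F (s (i+1)) (s (i+1+1)) := hd
          have hprod2 := mul_le_mul_of_nonneg_left e2 (by linarith : (0:ℝ) ≤ v - s (i+1))
          push_cast
          linarith [hEi, e, hUeq, hprod2]
        · have h1 := hcond1 (i+1) (by omega) (by omega) (by simpa using h)
          simp only [Nat.add_sub_cancel] at h1
          obtain ⟨ha1, ha2⟩ := h1
          have hsh := util_shift n F b s (i+1) (s i) (s (i+1))
          simp only [Nat.add_sub_cancel] at hsh
          push_cast
          linarith [hEi, (abs_le.mp ha1).2, (abs_le.mp ha2).1, hsh, hprod]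
    have hfin := hE ℓ' hjℓ' le_rfl
    have h1 := hcond1 (ℓ'+1) (by omega) hℓm (by simpa using lt_of_lt_of_le hv1 hv2)
    simp only [Nat.add_sub_cancel] at h1
    have hshℓ := util_shift n F b s (ℓ'+1) (s ℓ') v
    simp only [Nat.add_sub_cancel] at hshℓ
    have hcast1 : ((ℓ':ℝ)) + 1 ≤ (m:ℝ) := by exact_mod_cast hℓm
    have hμ : 0 ≤ γ * ((m:ℝ) - ((ℓ':ℝ) - (j':ℝ))) := by
      apply mul_nonneg hγ
      have : (0:ℝ) ≤ (j':ℝ) := Nat.cast_nonneg j'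
      linarith
    linarith [hfin, (abs_le.mp h1.2).1, hshℓ, hμ]
  · -- j = ℓ : trivial
    have : (0:ℝ) ≤ 2 * γ * m := by
      apply mul_nonneg (by linarith) (Nat.cast_nonneg m)
    linarith
  · -- upward deviation ℓ < j
    obtain ⟨j', rfl⟩ : ∃ j'', j = j'' + 1 := ⟨j - 1, by omega⟩
    have hℓj' : ℓ ≤ j' := by omega
    -- upper bound for bidding b_{i+1} at value s_i
    have hub : ∀ i : ℕ, 1 ≤ i → i < m → util n F b s (i+1) (s i) ≤ U i + γ := by
      intro i hi1 him
      rcases eq_or_lt_of_le (hsmono i him) with h | h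
      · obtain ⟨hUeq, hle⟩ := hcond2 (i+1) (by omega) (by omega) (by simpa using h)
        simp only [Nat.add_sub_cancel] at hUeq
        calc util n F b s (i+1) (s i) = util n F b s (i+1) (s (i+1)) := by rw [h]
          _ ≤ U (i+1) + γ := hle
          _ = U i + γ := by rw [hUeq]
      · have h1 := (hcond1 (i+1) (by omega) (by omega) (by simpa using h)).2
        simp only [Nat.add_sub_cancel] at h1
        linarith [(abs_le.mp h1).2]
    -- chain: key inequality
    have key : ∀ i : ℕ, ℓ ≤ i → i ≤ j' →
        U i - (s i - v) * Delta n F (s i) (s (i+1))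
          ≤ util n F b s ℓ v + γ + 2 * γ * ((i:ℝ) - (ℓ:ℝ)) := by
      intro i hi
      induction i, hi using Nat.le_induction with
      | base =>
        intro hij
        have hℓlt : s (ℓ-1) < s ℓ := lt_of_lt_of_le hv1 hv2
        have h1 := (hcond1 ℓ hℓ1 hℓm hℓlt).1
        have hsh := util_shift n F b s ℓ v (s ℓ)
        have hd := hDm ℓ hℓ1 (by omega)
        have hprod := mul_le_mul_of_nonneg_left hd (by linarith : (0:ℝ) ≤ s ℓ - v)
        linarith [(abs_le.mp h1).1, hsh, hprod]
      | succ i hi ih =>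
        intro hij
        have hBi := ih (by omega)
        have hd := hDm (i+1) (by omega) (by omega)
        simp only [Nat.add_sub_cancel] at hd
        have hvsi : v ≤ s i := hv2.trans (hsle i (by omega) ℓ hi)
        have hvsi1 : v ≤ s (i+1) := hvsi.trans (hsmono i (by omega))
        rcases eq_or_lt_of_le (hsmono i (by omega)) with h | h
        · have hUeq := (hcond2 (i+1) (by omega) (by omega) (by simpa using h)).1
          simp only [Nat.add_sub_cancel] at hUeq
          have e : (s (i+1) - v) * Delta n F (s (i+1)) (s (i+1+1))
              = (s i - v) * Delta n F (s (i+1)) (s (i+1+1)) := by rw [h]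
          have hprod := mul_le_mul_of_nonneg_left hd (by linarith : (0:ℝ) ≤ s i - v)
          have e2 : Delta n F (s i) (s (i+1)) ≤ Delta n F (s (i+1)) (s (i+1+1)) := hd
          push_cast
          linarith [hBi, e, hUeq, mul_le_mul_of_nonneg_left e2
            (by linarith : (0:ℝ) ≤ s i - v)]
        · have h1 := hcond1 (i+1) (by omega) (by omega) (by simpa using h)
          simp only [Nat.add_sub_cancel] at h1
          obtain ⟨ha1, ha2⟩ := h1
          have hsh := util_shift n F b s (i+1) (s i) (s (i+1))
          simp only [Nat.add_sub_cancel] at hsh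
          have hprod := mul_le_mul_of_nonneg_left hd
            (by linarith : (0:ℝ) ≤ s (i+1) - v)
          push_cast
          linarith [hBi, (abs_le.mp ha1).1, (abs_le.mp ha2).2, hsh, hprod]
    have hkey := key j' hℓj' le_rfl
    have hfin := hub j' (by omega) (by omega)
    have hsh := util_shift n F b s (j'+1) (s j') v
    simp only [Nat.add_sub_cancel] at hsh
    have hcast1 : ((j':ℝ)) + 1 ≤ (m:ℝ) := by exact_mod_cast hjm
    have hcast2 : (1:ℝ) ≤ (ℓ:ℝ) := by exact_mod_cast hℓ1
    have hμ : 0 ≤ γ * ((m:ℝ) - ((j':ℝ) + 1 - (ℓ:ℝ))) := by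
      apply mul_nonneg hγ; linarith
    linarith [hkey, hfin, hsh, hμ]
end
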